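/- arXiv:1711.05640 — 4 statements merged into one kernel-verified Lean document; each statement's English description precedes it below -/
import Mathlib

section
/- Under the hypotheses of the contraction result (μ of the Jacobian of F bounded by c on a convex invariant set), if x₁(t), x₂(t) are solutions with x₁(t₀) − x₂(t₀) outside the measure-zero set S where the norm fails to be differentiable, then d/dt |x₁(t) − x₂(t)| evaluated at t = t₀ is at most c |x₁(t₀) − x₂(t₀)|. -/
/-!
With `z = x₁ t₀ - x₂ t₀` and `φ = DN(z)`, the chain rule gives the derivative as
`φ (F t₀ (x₁ t₀) - F t₀ (x₂ t₀))`, and the mean value theorem for `φ ∘ F t₀` on the convex set `X`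
rewrites this as `φ (J t₀ ξ *ᵥ z)` for some `ξ ∈ X`. For any matrix `A`, `φ (A *ᵥ z)` is the right
derivative at `0` of `h ↦ N ((1 + h • A) *ᵥ z)`, which starts at `N z` and is bounded by
`opNorm N (1 + h • A) * N z`; hence `φ (A *ᵥ z)` is at most the matrix measure of `A` times `N z`.
The bound by the operator norm needs the `N`-unit sphere to be compact (so that the supremum
defining `opNorm` is not the junk value of an unbounded set), which holds because every norm on
`ℝⁿ` is continuous, being convex, and attains a positive minimum on the Euclidean unit sphere.
-/

open Filter Set MeasureTheory

/-- `N` is a norm on `ℝⁿ`. -/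
def IsNorm {n : ℕ} (N : (Fin n → ℝ) → ℝ) : Prop :=
  (∀ x, N x = 0 ↔ x = 0) ∧ (∀ (c : ℝ) x, N (c • x) = |c| * N x) ∧
    (∀ x y, N (x + y) ≤ N x + N y)

/-- The matrix norm induced by the vector norm `N`. -/
noncomputable def opNorm {n : ℕ} (N : (Fin n → ℝ) → ℝ)
    (A : Matrix (Fin n) (Fin n) ℝ) : ℝ :=
  sSup ((fun x => N (A.mulVec x)) '' {x | N x = 1})

/-- `m` is the matrix measure of `A` induced by the vector norm `N`. -/
def HasMatrixMeasure {n : ℕ} (N : (Fin n → ℝ) → ℝ)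
    (A : Matrix (Fin n) (Fin n) ℝ) (m : ℝ) : Prop :=
  Tendsto (fun h : ℝ => (opNorm N (1 + h • A) - 1) / h)
    (nhdsWithin 0 (Ioi 0)) (nhds m)


namespace IsNorm

variable {n : ℕ} {N : (Fin n → ℝ) → ℝ}

theorem map_zero (hN : IsNorm N) : N 0 = 0 := (hN.1 0).2 rfl

theorem map_neg (hN : IsNorm N) (x : Fin n → ℝ) : N (-x) = N x := by
  simpa using hN.2.1 (-1) x

theorem nonneg (hN : IsNorm N) (x : Fin n → ℝ) : 0 ≤ N x := by
  have h := hN.2.2 x (-x)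
  rw [add_neg_cancel, hN.map_zero, hN.map_neg] at h
  linarith

theorem pos (hN : IsNorm N) {x : Fin n → ℝ} (hx : x ≠ 0) : 0 < N x :=
  (hN.nonneg x).lt_of_ne fun h => hx ((hN.1 x).1 h.symm)

theorem convexOn (hN : IsNorm N) : ConvexOn ℝ univ N := by
  refine ⟨convex_univ, fun x _ y _ a b ha hb _ => ?_⟩
  calc N (a • x + b • y) ≤ N (a • x) + N (b • y) := hN.2.2 _ _
    _ = a • N x + b • N y := by
      rw [hN.2.1, hN.2.1, abs_of_nonneg ha, abs_of_nonneg hb, smul_eq_mul, smul_eq_mul]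

theorem continuous (hN : IsNorm N) : Continuous N :=
  continuousOn_univ.1 (hN.convexOn.continuousOn isOpen_univ)

theorem exists_pos_mul_norm_le (hN : IsNorm N) : ∃ m > 0, ∀ x, m * ‖x‖ ≤ N x := by
  rcases subsingleton_or_nontrivial (Fin n → ℝ) with _ | _
  · exact ⟨1, one_pos, fun x => by simp [Subsingleton.elim x 0, hN.map_zero]⟩
  obtain ⟨u, hu, hmin⟩ := (isCompact_sphere (0 : Fin n → ℝ) 1).exists_isMinOn
    (NormedSpace.sphere_nonempty.2 zero_le_one) hN.continuous.continuousOn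
  refine ⟨N u, hN.pos (by rintro rfl; simp at hu), fun x => ?_⟩
  rcases eq_or_ne x 0 with rfl | hx
  · simp [hN.map_zero]
  have hx' : 0 < ‖x‖ := norm_pos_iff.2 hx
  have h : N u ≤ ‖x‖⁻¹ * N x := by
    have := hmin (a := ‖x‖⁻¹ • x) (by simp [norm_smul, hx'.ne'])
    rwa [Set.mem_ofPred_eq, hN.2.1, abs_of_pos (inv_pos.2 hx')] at this
  calc N u * ‖x‖ ≤ ‖x‖⁻¹ * N x * ‖x‖ := by gcongr
    _ = N x := by field_simp

theorem isCompact_setOf_eq_one (hN : IsNorm N) : IsCompact {x | N x = 1} := by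
  obtain ⟨m, hm, hmN⟩ := hN.exists_pos_mul_norm_le
  refine Metric.isCompact_of_isClosed_isBounded (isClosed_eq hN.continuous continuous_const) ?_
  refine (Metric.isBounded_closedBall (x := 0) (r := m⁻¹)).subset fun x (hx : N x = 1) => ?_
  rw [mem_closedBall_zero_iff]
  calc ‖x‖ = m⁻¹ * (m * ‖x‖) := by field_simp
    _ ≤ m⁻¹ * N x := by gcongr; exact hmN x
    _ = m⁻¹ := by rw [hx, mul_one]

theorem mulVec_le_opNorm_mul (hN : IsNorm N) (A : Matrix (Fin n) (Fin n) ℝ)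
    (x : Fin n → ℝ) : N (A.mulVec x) ≤ opNorm N A * N x := by
  rcases eq_or_ne x 0 with rfl | hx
  · simp [hN.map_zero]
  have hNx := hN.pos hx
  have hbdd : BddAbove ((fun x => N (A.mulVec x)) '' {x | N x = 1}) :=
    hN.isCompact_setOf_eq_one.bddAbove_image
      (hN.continuous.comp (continuous_const.matrix_mulVec continuous_id)).continuousOn
  have hunit : N ((N x)⁻¹ • x) = 1 := by
    rw [hN.2.1, abs_of_pos (inv_pos.2 hNx), inv_mul_cancel₀ hNx.ne']
  have h : N (A.mulVec ((N x)⁻¹ • x)) ≤ opNorm N A := le_csSup hbdd ⟨_, hunit, rfl⟩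
  rw [Matrix.mulVec_smul, hN.2.1, abs_of_pos (inv_pos.2 hNx), inv_mul_le_iff₀ hNx] at h
  linarith

end IsNorm

theorem HasMatrixMeasure.apply_mulVec_le_of_hasFDerivAt {n : ℕ} {N : (Fin n → ℝ) → ℝ}
    (hN : IsNorm N) {A : Matrix (Fin n) (Fin n) ℝ} {m : ℝ} (hA : HasMatrixMeasure N A m)
    {z : Fin n → ℝ} {φ : (Fin n → ℝ) →L[ℝ] ℝ} (hφ : HasFDerivAt N φ z) :
    φ (A.mulVec z) ≤ m * N z := by
  have hslope := (hφ.hasLineDerivAt (A.mulVec z)).tendsto_slope_zero_right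
  refine le_of_tendsto_of_tendsto hslope (hA.mul_const (N z)) ?_
  filter_upwards [self_mem_nhdsWithin] with h (hh : 0 < h)
  have hstep : N (z + h • A.mulVec z) ≤ opNorm N (1 + h • A) * N z := by
    simpa [Matrix.add_mulVec, Matrix.smul_mulVec] using hN.mulVec_le_opNorm_mul (1 + h • A) z
  rw [smul_eq_mul, div_mul_eq_mul_div, inv_mul_eq_div]
  gcongr
  linarith [hN.nonneg z]

theorem deriv_of_norm_of_difference_le_general (n : ℕ)
    (N : (Fin n → ℝ) → ℝ) (hN : IsNorm N)
    (S : Set (Fin n → ℝ))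
    (hNd : ∀ z ∉ S, DifferentiableAt ℝ N z)
    (X : Set (Fin n → ℝ)) (hX : Convex ℝ X)
    (F : ℝ → (Fin n → ℝ) → (Fin n → ℝ))
    (J : ℝ → (Fin n → ℝ) → Matrix (Fin n) (Fin n) ℝ)
    (hFd : ∀ t, 0 ≤ t → ∀ x ∈ X,
      HasFDerivWithinAt (F t) ((J t x).mulVecLin.toContinuousLinearMap) X x)
    (c : ℝ)
    (hμ : ∀ t, 0 ≤ t → ∀ x ∈ X,
      ∃ m : ℝ, HasMatrixMeasure N (J t x) m ∧ m ≤ c)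
    (x₁ x₂ : ℝ → (Fin n → ℝ)) (t₀ : ℝ) (ht₀ : 0 ≤ t₀)
    (hx₁ : ∀ t, t₀ ≤ t → HasDerivAt x₁ (F t (x₁ t)) t ∧ x₁ t ∈ X)
    (hx₂ : ∀ t, t₀ ≤ t → HasDerivAt x₂ (F t (x₂ t)) t ∧ x₂ t ∈ X)
    (hS₀ : x₁ t₀ - x₂ t₀ ∉ S) :
    deriv (fun t => N (x₁ t - x₂ t)) t₀ ≤ c * N (x₁ t₀ - x₂ t₀) := by
  obtain ⟨hd₁, hX₁⟩ := hx₁ t₀ le_rfl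
  obtain ⟨hd₂, hX₂⟩ := hx₂ t₀ le_rfl
  set z := x₁ t₀ - x₂ t₀
  set φ := fderiv ℝ N z
  have hφ : HasFDerivAt N φ z := (hNd z hS₀).hasFDerivAt
  have hderiv : HasDerivAt (fun t => N (x₁ t - x₂ t)) (φ (F t₀ (x₁ t₀) - F t₀ (x₂ t₀))) t₀ :=
    hφ.comp_hasDerivAt t₀ (hd₁.sub hd₂)
  rw [hderiv.deriv, map_sub]
  obtain ⟨ξ, hξ, hmvt⟩ := domain_mvt (f := fun x => φ (F t₀ x))
    (fun x hx => φ.hasFDerivAt.comp_hasFDerivWithinAt x (hFd t₀ ht₀ x hx)) hX hX₂ hX₁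
  obtain ⟨m, hm, hmc⟩ := hμ t₀ ht₀ ξ (hX.segment_subset hX₂ hX₁ hξ)
  calc φ (F t₀ (x₁ t₀)) - φ (F t₀ (x₂ t₀)) = φ ((J t₀ ξ).mulVec z) := hmvt
    _ ≤ m * N z := hm.apply_mulVec_le_of_hasFDerivAt hN hφ
    _ ≤ c * N z := by gcongr; exact hN.nonneg z

/-- under the contraction hypotheses (μ of the Jacobian of `F`
bounded by `c` on a convex invariant set), if `x₁(t₀) − x₂(t₀)` lies outside the
measure-zero set `S` where the norm fails to be differentiable, then
`d/dt |x₁(t) − x₂(t)|` at `t = t₀` is at most `c |x₁(t₀) − x₂(t₀)|`. -/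
theorem deriv_of_norm_of_difference_le (n : ℕ) (hn : 0 < n)
    (N : (Fin n → ℝ) → ℝ) (hN : IsNorm N)
    (S : Set (Fin n → ℝ)) (hS : volume S = 0)
    (hNd : ∀ z ∉ S, DifferentiableAt ℝ N z)
    (X : Set (Fin n → ℝ)) (hX : Convex ℝ X)
    (F : ℝ → (Fin n → ℝ) → (Fin n → ℝ))
    (J : ℝ → (Fin n → ℝ) → Matrix (Fin n) (Fin n) ℝ)
    (hFc : ContinuousOn (fun p : ℝ × (Fin n → ℝ) => F p.1 p.2) (Ici 0 ×ˢ X))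
    (hJc : ContinuousOn (fun p : ℝ × (Fin n → ℝ) => J p.1 p.2) (Ici 0 ×ˢ X))
    (hFd : ∀ t, 0 ≤ t → ∀ x ∈ X,
      HasFDerivWithinAt (F t) ((J t x).mulVecLin.toContinuousLinearMap) X x)
    (c : ℝ)
    (hμ : ∀ t, 0 ≤ t → ∀ x ∈ X,
      ∃ m : ℝ, HasMatrixMeasure N (J t x) m ∧ m ≤ c)
    (x₁ x₂ : ℝ → (Fin n → ℝ)) (t₀ : ℝ) (ht₀ : 0 ≤ t₀)
    (hx₁ : ∀ t, t₀ ≤ t → HasDerivAt x₁ (F t (x₁ t)) t ∧ x₁ t ∈ X)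
    (hx₂ : ∀ t, t₀ ≤ t → HasDerivAt x₂ (F t (x₂ t)) t ∧ x₂ t ∈ X)
    (hS₀ : x₁ t₀ - x₂ t₀ ∉ S) :
    deriv (fun t => N (x₁ t - x₂ t)) t₀ ≤ c * N (x₁ t₀ - x₂ t₀) :=
  deriv_of_norm_of_difference_le_general n N hN S hNd X hX F J hFd c hμ x₁ x₂ t₀ ht₀ hx₁ hx₂ hS₀
end

section
/- Let G : ℝⁿ → ℝ be locally Lipschitz, differentiable off a measure-zero set S. Then the Clarke generalized directional derivative G°(x;v) = limsup_{z→x, h→0⁺} (G(z+hv) − G(z))/h equals limsup_{z→x, z∉S} ∇G(z)·v. -/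
/-!
Near `x` the function `G` is Lipschitz, so both limsups are limsups of bounded quantities.
At `z ∉ S` the gradient value `∇G(z)·v` is the limit of the difference quotients at `z` as
`h → 0⁺`, which bounds the gradient limsup by the Clarke derivative. Conversely, suppose
`∇G·v ≤ c` off `S` near `x`. By Fubini for Haar measure, for almost every `z` the line `z + ℝv`
meets `S` in a null set; along such a line `t ↦ G(z + tv)` is Lipschitz, hence absolutely
continuous, hence the integral of its derivative, which is `≤ c` almost everywhere. This gives
`G(z + hv) - G(z) ≤ ch` for a dense set of `z`, hence for all `z` near `x` by continuity.
-/

open Filter Set MeasureTheory Topology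
open scoped NNReal

theorem LipschitzOnWith.sub_le_mul_of_ae_deriv_le {f : ℝ → ℝ} {K : ℝ≥0} {a b c : ℝ}
    (hab : a ≤ b) (hf : LipschitzOnWith K f (Icc a b))
    (hc : ∀ᵐ t, t ∈ Ioo a b → deriv f t ≤ c) :
    f b - f a ≤ c * (b - a) := by
  have hac := (uIcc_of_le hab ▸ hf).absolutelyContinuousOnInterval
  have hc' : ∀ᵐ t ∂volume.restrict (Icc a b), deriv f t ≤ c := by
    rwa [← Measure.restrict_congr_set Ioo_ae_eq_Icc, ae_restrict_iff' measurableSet_Ioo]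
  rw [← hac.integral_deriv_eq_sub]
  calc ∫ t in a..b, deriv f t ≤ ∫ _ in a..b, c :=
        intervalIntegral.integral_mono_ae_restrict hab hac.intervalIntegrable_deriv
          intervalIntegrable_const hc'
    _ = c * (b - a) := by simp [mul_comm]

theorem Filter.limsup_le_limsup_of_forall_eventually_le {α β γ : Type*}
    [ConditionallyCompleteLinearOrder γ] [DenselyOrdered γ] {f : Filter α} {g : Filter β}
    {u : α → γ} {w : β → γ} (hu : f.IsCoboundedUnder (· ≤ ·) u)
    (hw : g.IsBoundedUnder (· ≤ ·) w) (h : ∀ c, (∀ᶠ b in g, w b ≤ c) → ∀ᶠ a in f, u a ≤ c) :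
    limsup u f ≤ limsup w g :=
  le_of_forall_gt_imp_ge_of_dense fun c hc =>
    limsup_le_of_le hu (h c ((eventually_lt_of_limsup_lt hc hw).mono fun _ => le_of_lt))

variable {E : Type*} [NormedAddCommGroup E] [NormedSpace ℝ E]

theorem Convex.add_smul_mem_of_mem_Icc {U : Set E} (hU : Convex ℝ U) {z v : E} {h t : ℝ}
    (hz : z ∈ U) (hzh : z + h • v ∈ U) (ht : t ∈ Icc 0 h) : z + t • v ∈ U := by
  rcases ht.1.eq_or_lt with rfl | ht0
  · simpa using hz
  have hh : 0 < h := ht0.trans_le ht.2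
  convert hU.add_smul_mem hz hzh ⟨div_nonneg ht.1 hh.le, div_le_one_of_le₀ ht.2 hh.le⟩ using 2
  rw [smul_smul, div_mul_cancel₀ _ hh.ne']

theorem MeasureTheory.Measure.ae_ae_add_smul_notMem [MeasurableSpace E] [BorelSpace E]
    [FiniteDimensional ℝ E] {μ : Measure E} [μ.IsAddHaarMeasure] {S : Set E} (hS : μ S = 0)
    (v : E) : ∀ᵐ z ∂μ, ∀ᵐ t : ℝ, z + t • v ∉ S := by
  obtain ⟨T, hST, hTm, hT⟩ := exists_measurable_superset_of_null hS
  have hline := (ae_ae_add_linearMap_mem_iff ((LinearMap.id : ℝ →ₗ[ℝ] ℝ).smulRight v) volume μ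
    hTm.compl).2 (measure_eq_zero_iff_ae_notMem.1 hT)
  filter_upwards [hline] with z hz
  filter_upwards [hz] with t ht using fun htS => ht (hST htS)

section LineSegments

variable {G : E → ℝ} {K : ℝ≥0} {U S : Set E} {z v : E} {h c : ℝ}

theorem LipschitzOnWith.sub_le_mul_of_fderiv_le_of_ae_notMem_line (hU : Convex ℝ U)
    (hG : LipschitzOnWith K G U) (hGd : ∀ w ∈ U \ S, DifferentiableAt ℝ G w)
    (hc : ∀ w ∈ U \ S, fderiv ℝ G w v ≤ c) (hz : z ∈ U) (hzh : z + h • v ∈ U) (hh : 0 ≤ h)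
    (hline : ∀ᵐ t : ℝ, z + t • v ∉ S) :
    G (z + h • v) - G z ≤ c * h := by
  have hseg : MapsTo (fun t : ℝ => z + t • v) (Icc 0 h) U := fun t ht =>
    hU.add_smul_mem_of_mem_Icc hz hzh ht
  have hlip := hG.comp ((LipschitzWith.const z).add
    ((ContinuousLinearMap.smulRight (1 : ℝ →L[ℝ] ℝ) v).lipschitz)).lipschitzOnWith hseg
  have key := hlip.sub_le_mul_of_ae_deriv_le (c := c) hh ?_
  · simpa using key
  filter_upwards [hline] with t htS ht
  have hw : z + t • v ∈ U \ S := ⟨hseg (Ioo_subset_Icc_self ht), htS⟩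
  have hd : HasDerivAt (fun s : ℝ => G (z + s • v)) (fderiv ℝ G (z + t • v) v) t :=
    (hGd _ hw).hasFDerivAt.comp_hasDerivAt t
      ((((hasDerivAt_id' t).smul_const v).const_add z).congr_deriv (one_smul ℝ v))
  exact hd.deriv ▸ hc _ hw

theorem LipschitzOnWith.sub_le_mul_of_fderiv_le_off_null [MeasurableSpace E] [BorelSpace E]
    [FiniteDimensional ℝ E] {μ : Measure E} [μ.IsAddHaarMeasure] (hU : Convex ℝ U)
    (hUo : IsOpen U) (hG : LipschitzOnWith K G U) (hS : μ S = 0)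
    (hGd : ∀ w ∈ U \ S, DifferentiableAt ℝ G w) (hc : ∀ w ∈ U \ S, fderiv ℝ G w v ≤ c)
    (hz : z ∈ U) (hzh : z + h • v ∈ U) (hh : 0 ≤ h) :
    G (z + h • v) - G z ≤ c * h := by
  set good := {y : E | ∀ᵐ t : ℝ, y + t • v ∉ S}
  have : (𝓝[good] z).NeBot := mem_closure_iff_nhdsWithin_neBot.1
    (Measure.dense_of_ae (Measure.ae_ae_add_smul_notMem hS v) z)
  have hcont : ContinuousAt (fun y => G (y + h • v) - G y) z :=
    ((hG.continuousOn.continuousAt (hUo.mem_nhds hzh)).comp (x := z)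
      (continuous_add_const (h • v)).continuousAt).sub
      (hG.continuousOn.continuousAt (hUo.mem_nhds hz))
  have hnear : ∀ᶠ y in 𝓝 z, y ∈ U ∧ y + h • v ∈ U :=
    (hUo.eventually_mem hz).and
      ((continuous_add_const (h • v)).continuousAt.eventually_mem (hUo.mem_nhds hzh))
  refine le_of_tendsto (hcont.tendsto.mono_left (nhdsWithin_le_nhds (s := good))) ?_
  filter_upwards [self_mem_nhdsWithin, mem_nhdsWithin_of_mem_nhds hnear] with y hy hyU
  exact hG.sub_le_mul_of_fderiv_le_of_ae_notMem_line hU hGd hc hyU.1 hyU.2 hh hy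

end LineSegments

section Slopes

variable {G : E → ℝ} {K : ℝ≥0} {t : Set E} {x v : E}

theorem tendsto_add_smul_nhds_prod_nhdsGT (x v : E) :
    Tendsto (fun p : E × ℝ => p.1 + p.2 • v) (𝓝 x ×ˢ 𝓝[>] 0) (𝓝 x) := by
  simpa using (tendsto_fst (g := 𝓝[>] (0 : ℝ))).add
    ((tendsto_snd.mono_right nhdsWithin_le_nhds).smul_const v)

theorem LipschitzOnWith.eventually_abs_slope_le (hG : LipschitzOnWith K G t) (ht : t ∈ 𝓝 x)
    (v : E) :
    ∀ᶠ p in 𝓝 x ×ˢ 𝓝[>] (0 : ℝ), |(G (p.1 + p.2 • v) - G p.1) / p.2| ≤ K * ‖v‖ := by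
  filter_upwards [tendsto_fst ht, tendsto_add_smul_nhds_prod_nhdsGT x v ht,
    tendsto_snd self_mem_nhdsWithin] with p hp hpv (hp0 : 0 < p.2)
  rw [abs_div, abs_of_pos hp0, div_le_iff₀ hp0, ← Real.dist_eq]
  calc dist (G (p.1 + p.2 • v)) (G p.1) ≤ K * dist (p.1 + p.2 • v) p.1 :=
        hG.dist_le_mul _ hpv _ hp
    _ = K * ‖v‖ * p.2 := by
      rw [dist_eq_norm, add_sub_cancel_left, norm_smul, Real.norm_of_nonneg hp0.le]; ring

theorem LipschitzOnWith.eventually_abs_fderiv_apply_le (hG : LipschitzOnWith K G t)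
    (ht : t ∈ 𝓝 x) (v : E) : ∀ᶠ z in 𝓝 x, |fderiv ℝ G z v| ≤ K * ‖v‖ := by
  filter_upwards [eventually_mem_nhds_iff.2 ht] with z hz
  rw [← Real.norm_eq_abs]
  exact (fderiv ℝ G z).le_opNorm v |>.trans <|
    mul_le_mul_of_nonneg_right (norm_fderiv_le_of_lipschitzOn ℝ hz hG) (norm_nonneg v)

theorem LipschitzOnWith.eventually_slope_le_of_eventually_fderiv_le [MeasurableSpace E]
    [BorelSpace E] [FiniteDimensional ℝ E] {μ : Measure E} [μ.IsAddHaarMeasure] {S : Set E}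
    (hG : LipschitzOnWith K G t) (ht : t ∈ 𝓝 x) (hS : μ S = 0)
    (hGd : ∀ z ∉ S, DifferentiableAt ℝ G z) {c : ℝ}
    (hc : ∀ᶠ z in 𝓝[Sᶜ] x, fderiv ℝ G z v ≤ c) :
    ∀ᶠ p in 𝓝 x ×ˢ 𝓝[>] (0 : ℝ), (G (p.1 + p.2 • v) - G p.1) / p.2 ≤ c := by
  rw [eventually_nhdsWithin_iff] at hc
  obtain ⟨r, hr, hball⟩ := Metric.mem_nhds_iff.1 (inter_mem ht hc)
  filter_upwards [tendsto_fst (Metric.ball_mem_nhds x hr),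
    tendsto_add_smul_nhds_prod_nhdsGT x v (Metric.ball_mem_nhds x hr),
    tendsto_snd self_mem_nhdsWithin] with p hp hpv (hp0 : 0 < p.2)
  rw [div_le_iff₀ hp0]
  exact (hG.mono fun w hw => (hball hw).1).sub_le_mul_of_fderiv_le_off_null (convex_ball x r)
    Metric.isOpen_ball hS (fun w hw => hGd w hw.2) (fun w hw => (hball hw.1).2 hw.2) hp hpv
    hp0.le

theorem eventually_fderiv_le_of_eventually_slope_le {S : Set E}
    (hGd : ∀ z ∉ S, DifferentiableAt ℝ G z) {c : ℝ}
    (hc : ∀ᶠ p in 𝓝 x ×ˢ 𝓝[>] (0 : ℝ), (G (p.1 + p.2 • v) - G p.1) / p.2 ≤ c) :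
    ∀ᶠ z in 𝓝[Sᶜ] x, fderiv ℝ G z v ≤ c := by
  obtain ⟨P, hP, T, hT, hPT⟩ := eventually_prod_iff.1 hc
  filter_upwards [hP.filter_mono nhdsWithin_le_nhds, self_mem_nhdsWithin] with z hzP hzS
  refine le_of_tendsto ((hGd z hzS).hasFDerivAt.hasLineDerivAt v).tendsto_slope_zero_right ?_
  filter_upwards [hT] with h hh
  simpa [div_eq_inv_mul] using hPT hzP hh

end Slopes

/-- for a locally Lipschitz `G : ℝⁿ → ℝ`, differentiable off a
measure-zero set `S`, the Clarke generalized directional derivative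
`G°(x;v) = limsup_{z→x, h→0⁺} (G(z+hv) − G(z))/h` equals
`limsup_{z→x, z∉S} ∇G(z)·v`. -/
theorem clarke_derivative_eq_limsup_gradient (n : ℕ)
    (G : (Fin n → ℝ) → ℝ) (hG : LocallyLipschitz G)
    (S : Set (Fin n → ℝ)) (hS : volume S = 0)
    (hGd : ∀ z ∉ S, DifferentiableAt ℝ G z)
    (x v : Fin n → ℝ) :
    Filter.limsup
        (fun p : (Fin n → ℝ) × ℝ => (G (p.1 + p.2 • v) - G p.1) / p.2)
        ((nhds x) ×ˢ (nhdsWithin 0 (Ioi 0)))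
      = Filter.limsup (fun z => fderiv ℝ G z v) (nhdsWithin x Sᶜ) := by
  obtain ⟨K, t, ht, hGt⟩ := hG x
  have : (𝓝[Sᶜ] x).NeBot := mem_closure_iff_nhdsWithin_neBot.1
    (Measure.dense_of_ae (measure_eq_zero_iff_ae_notMem.1 hS) x)
  have hslope := hGt.eventually_abs_slope_le ht v
  have hgrad :=
    (hGt.eventually_abs_fderiv_apply_le ht v).filter_mono (nhdsWithin_le_nhds (s := Sᶜ))
  apply le_antisymm
  · exact limsup_le_limsup_of_forall_eventually_le
      (isCoboundedUnder_le_of_eventually_le _ (hslope.mono fun _ => neg_le_of_abs_le))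
      (isBoundedUnder_of_eventually_le (hgrad.mono fun _ => le_of_abs_le))
      fun _ => hGt.eventually_slope_le_of_eventually_fderiv_le ht hS hGd
  · exact limsup_le_limsup_of_forall_eventually_le
      (isCoboundedUnder_le_of_eventually_le _ (hgrad.mono fun _ => neg_le_of_abs_le))
      (isBoundedUnder_of_eventually_le (hslope.mono fun _ => le_of_abs_le))
      fun _ => eventually_fderiv_le_of_eventually_slope_le hGd
end

section
/- Luenberger observer convergence: if μ(∂f/∂x(t,x) + L ∂g/∂x(t,x)) ≤ c for all x ∈ 𝒳 and t ≥ 0, then for any solution (x(t), x̂(t)) of the system ẋ = f(t,x), y = g(t,x) interconnected with the observer x̂̇ = f(t,x̂) + L(g(t,x̂) − g(t,x)), one has |x(t) − x̂(t)| ≤ e^{ct} |x(0) − x̂(0)| for all t ≥ 0. In particular, c < 0 implies global exponential stability of the zero-error set {x = x̂}. -/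
open Filter Set

/-!
The error `e = x - x̂` obeys `ė = F(t, x) - F(t, x̂)` with `F = f + L g`, whose Jacobian is
`A = ∂f/∂x + L ∂g/∂x`. On `ℝⁿ` normed by `N`, `opNorm` is the operator norm and the matrix
measure is the logarithmic norm `lim_{h → 0⁺} (‖1 + h A‖ - 1) / h`. The quotient is monotone in
`h`, so by continuity of `A` and compactness of the segment `[x̂, x]` one step size `h` makes
`‖1 + h A(y)‖ ≤ 1 + h K` for all `y` on the segment, for any `K > c`. The mean value inequality
for the Euler map `y ↦ y + h F(t, y)` then gives `‖e + h ė‖ ≤ (1 + h K) ‖e‖`, so the right Dini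
derivative of `‖e‖` is at most `c ‖e‖`, and Grönwall's inequality concludes.
-/

open Topology

section LogNorm

variable {E : Type*} [NormedAddCommGroup E] [NormedSpace ℝ E]

def HasLogNorm (T : E →L[ℝ] E) (m : ℝ) : Prop :=
  Tendsto (fun h : ℝ => (‖1 + h • T‖ - 1) / h) (𝓝[>] 0) (𝓝 m)

theorem HasLogNorm.eventually_norm_one_add_smul_lt {T : E →L[ℝ] E} {m K : ℝ}
    (hT : HasLogNorm T m) (hK : m < K) : ∀ᶠ h in 𝓝[>] 0, ‖1 + h • T‖ < 1 + h * K := by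
  filter_upwards [hT.eventually (eventually_lt_nhds hK), self_mem_nhdsWithin]
    with h hlt (hpos : 0 < h)
  rw [div_lt_iff₀ hpos] at hlt
  linarith

theorem norm_one_add_smul_le_of_le (T : E →L[ℝ] E) {K h h' : ℝ} (hh : 0 ≤ h) (hhh' : h ≤ h')
    (H : ‖1 + h' • T‖ ≤ 1 + h' * K) : ‖1 + h • T‖ ≤ 1 + h * K := by
  have hone : ‖(1 : E →L[ℝ] E)‖ ≤ 1 := ContinuousLinearMap.norm_id_le
  rcases hh.eq_or_lt with rfl | hpos
  · simpa using hone
  have hh' : 0 < h' := hpos.trans_le hhh'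
  set θ := h / h' with hθ
  have hθ0 : 0 ≤ θ := by positivity
  have hθ1 : θ ≤ 1 := div_le_one_of_le₀ hhh' hh'.le
  have hsplit : 1 + h • T = θ • (1 + h' • T) + (1 - θ) • (1 : E →L[ℝ] E) := by
    rw [smul_add, smul_smul, div_mul_cancel₀ h hh'.ne', sub_smul, one_smul]
    abel
  calc ‖1 + h • T‖ ≤ θ * ‖1 + h' • T‖ + (1 - θ) * ‖(1 : E →L[ℝ] E)‖ := by
        rw [hsplit]
        refine (norm_add_le _ _).trans_eq ?_
        rw [norm_smul, norm_smul, Real.norm_of_nonneg hθ0, Real.norm_of_nonneg (sub_nonneg.2 hθ1)]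
    _ ≤ θ * (1 + h' * K) + (1 - θ) * 1 := by gcongr
    _ = 1 + h * K := by
        rw [hθ]
        field_simp
        ring

theorem IsCompact.eventually_forall_norm_one_add_smul_le {X : Type*} [TopologicalSpace X]
    {S : Set X} (hS : IsCompact S) {A : X → E →L[ℝ] E} (hA : ContinuousOn A S) {K : ℝ}
    (hK : ∀ y ∈ S, ∀ᶠ h in 𝓝[>] 0, ‖1 + h • A y‖ < 1 + h * K) :
    ∀ᶠ h in 𝓝[>] 0, ∀ y ∈ S, ‖1 + h • A y‖ ≤ 1 + h * K := by
  have hloc : ∀ y ∈ S, ∀ᶠ p : ℝ × X in 𝓝 (0, y),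
      p.2 ∈ S → 0 < p.1 → ‖1 + p.1 • A p.2‖ ≤ 1 + p.1 * K := by
    intro y hy
    obtain ⟨hy₀, hlt, hpos⟩ := ((hK y hy).and self_mem_nhdsWithin).exists
    have hnear : ∀ᶠ z in 𝓝[S] y, ‖1 + hy₀ • A z‖ < 1 + hy₀ * K :=
      ((continuousWithinAt_const.add ((hA y hy).const_smul hy₀)).norm).eventually
        (eventually_lt_nhds hlt)
    rw [eventually_nhdsWithin_iff] at hnear
    filter_upwards [(eventually_lt_nhds hpos).prod_nhds hnear] with p hp hpS hp0
    exact norm_one_add_smul_le_of_le _ hp0.le hp.1.le (hp.2 hpS).le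
  filter_upwards [nhdsWithin_le_nhds (hS.eventually_forall_of_forall_eventually
    (P := fun h y => y ∈ S → 0 < h → ‖1 + h • A y‖ ≤ 1 + h * K) hloc),
    self_mem_nhdsWithin] with h hh hpos y hy using hh y hy hy hpos

theorem Convex.eventually_norm_sub_add_smul_sub_le {X : Set E} (hX : Convex ℝ X) {F : E → E}
    {A : E → E →L[ℝ] E} (hF : ∀ y ∈ X, HasFDerivWithinAt F (A y) X y) (hA : ContinuousOn A X)
    {K : ℝ} (hK : ∀ y ∈ X, ∀ᶠ h in 𝓝[>] 0, ‖1 + h • A y‖ < 1 + h * K) {u v : E} (hu : u ∈ X)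
    (hv : v ∈ X) :
    ∀ᶠ h in 𝓝[>] 0, ‖u - v + h • (F u - F v)‖ ≤ (1 + h * K) * ‖u - v‖ := by
  have hseg : segment ℝ v u ⊆ X := hX.segment_subset hv hu
  have hcpt : IsCompact (segment ℝ v u) := by
    rw [segment_eq_image_lineMap]
    exact isCompact_Icc.image AffineMap.lineMap_continuous
  filter_upwards [hcpt.eventually_forall_norm_one_add_smul_le (hA.mono hseg)
    fun y hy => hK y (hseg hy)] with h hh
  have hderiv : ∀ y ∈ segment ℝ v u,
      HasFDerivWithinAt (fun z => z + h • F z) (1 + h • A y) (segment ℝ v u) y :=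
    fun y hy => (hasFDerivWithinAt_id y _).add (((hF y (hseg hy)).mono hseg).const_smul h)
  have := (convex_segment v u).norm_image_sub_le_of_norm_hasFDerivWithin_le hderiv hh
    (left_mem_segment ℝ v u) (right_mem_segment ℝ v u)
  convert this using 2
  rw [smul_sub]
  abel

theorem HasDerivWithinAt.eventually_slope_norm_lt {w : ℝ → E} {w' : E} {t K r : ℝ}
    (hw : HasDerivWithinAt w w' (Ioi t) t)
    (hstep : ∀ᶠ h in 𝓝[>] 0, ‖w t + h • w'‖ ≤ (1 + h * K) * ‖w t‖) (hr : K * ‖w t‖ < r) :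
    ∀ᶠ z in 𝓝[>] t, (z - t)⁻¹ * (‖w z‖ - ‖w t‖) < r := by
  have hslope : Tendsto (fun z => ‖slope w t z - w'‖) (𝓝[>] t) (𝓝 0) :=
    tendsto_iff_norm_sub_tendsto_zero.1 ((hasDerivWithinAt_iff_tendsto_slope' (lt_irrefl t)).1 hw)
  have hshift : Tendsto (fun z => z - t) (𝓝[>] t) (𝓝[>] 0) := by
    have : Tendsto (· + -t) (𝓝[>] t) (𝓝[>] (t + -t)) := map_add_right_nhdsGT.le
    simpa only [add_neg_cancel, ← sub_eq_add_neg] using this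
  filter_upwards [hslope.eventually (eventually_lt_nhds (sub_pos.2 hr)), hshift.eventually hstep,
    self_mem_nhdsWithin] with z hz hstep_z (htz : t < z)
  have hδ : 0 < z - t := sub_pos.2 htz
  have hdecomp : w z = (z - t) • (slope w t z - w') + (w t + (z - t) • w') := by
    rw [smul_sub, sub_smul_slope, vsub_eq_sub]
    abel
  have hnorm : ‖w z‖ ≤ (z - t) * ‖slope w t z - w'‖ + (1 + (z - t) * K) * ‖w t‖ := by
    calc ‖w z‖ ≤ ‖(z - t) • (slope w t z - w')‖ + ‖w t + (z - t) • w'‖ :=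
          hdecomp ▸ norm_add_le _ _
      _ ≤ _ := by
          rw [norm_smul, Real.norm_of_nonneg hδ.le]
          gcongr
  rw [inv_mul_lt_iff₀ hδ]
  nlinarith

theorem norm_le_exp_mul_of_eventually_norm_add_smul_le {w w' : ℝ → E} {c : ℝ}
    (hw : ∀ t ≥ 0, HasDerivWithinAt w (w' t) (Ici 0) t)
    (hstep : ∀ t ≥ 0, ∀ K > c, ∀ᶠ h in 𝓝[>] 0, ‖w t + h • w' t‖ ≤ (1 + h * K) * ‖w t‖) :
    ∀ t ≥ 0, ‖w t‖ ≤ Real.exp (c * t) * ‖w 0‖ := by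
  intro T hT
  have hcont : ContinuousOn (fun t => ‖w t‖) (Icc 0 T) := fun t ht =>
    ((hw t ht.1).continuousWithinAt.mono Icc_subset_Ici_self).norm
  -- the slack `K > c` is chosen for each `r`, so no limit `K → c` is needed afterwards
  have hdini : ∀ t ∈ Ico 0 T, ∀ r, c * ‖w t‖ < r →
      ∃ᶠ z in 𝓝[>] t, (z - t)⁻¹ * (‖w z‖ - ‖w t‖) < r := by
    intro t ht r hr
    have hlim : Tendsto (fun K => K * ‖w t‖) (𝓝[>] c) (𝓝 (c * ‖w t‖)) :=
      ((continuous_mul_const _).tendsto c).mono_left nhdsWithin_le_nhds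
    obtain ⟨K, hKr, hcK⟩ := ((hlim.eventually (eventually_lt_nhds hr)).and
      self_mem_nhdsWithin).exists
    exact ((hw t ht.1).mono (Ioi_subset_Ici ht.1)).eventually_slope_norm_lt
      (hstep t ht.1 K hcK) hKr |>.frequently
  have := le_gronwallBound_of_liminf_deriv_right_le hcont hdini le_rfl
    (fun t _ => (add_zero _).ge) T ⟨hT, le_rfl⟩
  rwa [gronwallBound_ε0, sub_zero, mul_comm] at this

theorem Convex.norm_sub_le_exp_mul_of_hasLogNorm_le {X : Set E} (hX : Convex ℝ X)
    {F : ℝ → E → E} {A : ℝ → E → E →L[ℝ] E} {c : ℝ}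
    (hF : ∀ t ≥ 0, ∀ y ∈ X, HasFDerivWithinAt (F t) (A t y) X y)
    (hA : ∀ t ≥ 0, ContinuousOn (A t) X) (hμ : ∀ t ≥ 0, ∀ y ∈ X, ∃ m ≤ c, HasLogNorm (A t y) m)
    {u v : ℝ → E}
    (huv : ∀ t ≥ 0, HasDerivWithinAt (fun s => u s - v s) (F t (u t) - F t (v t)) (Ici 0) t)
    (hu : ∀ t ≥ 0, u t ∈ X) (hv : ∀ t ≥ 0, v t ∈ X) :
    ∀ t ≥ 0, ‖u t - v t‖ ≤ Real.exp (c * t) * ‖u 0 - v 0‖ :=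
  norm_le_exp_mul_of_eventually_norm_add_smul_le huv fun t ht K hK =>
    hX.eventually_norm_sub_add_smul_sub_le (hF t ht) (hA t ht)
      (fun y hy => by
        obtain ⟨m, hm, hlog⟩ := hμ t ht y hy
        exact hlog.eventually_norm_one_add_smul_lt (hm.trans_lt hK))
      (hu t ht) (hv t ht)

end LogNorm

section MatrixMeasure

variable {n : ℕ} {N : (Fin n → ℝ) → ℝ}

theorem IsNorm.nonneg_s11 (hN : IsNorm N) (x : Fin n → ℝ) : 0 ≤ N x := by
  have h := hN.2.2 x ((-1 : ℝ) • x)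
  rw [hN.2.1, neg_one_smul, add_neg_cancel, (hN.1 0).2 rfl] at h
  norm_num at h
  linarith

-- `hN` is an index of the type only so that the instances below can use it.
def WithNorm (N : (Fin n → ℝ) → ℝ) (_ : IsNorm N) : Type := Fin n → ℝ

namespace WithNorm

variable {hN : IsNorm N}

instance : AddCommGroup (WithNorm N hN) := inferInstanceAs (AddCommGroup (Fin n → ℝ))
instance : Module ℝ (WithNorm N hN) := inferInstanceAs (Module ℝ (Fin n → ℝ))
instance : FiniteDimensional ℝ (WithNorm N hN) := inferInstanceAs (FiniteDimensional ℝ (Fin n → ℝ))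
instance : Norm (WithNorm N hN) := ⟨N⟩

theorem normedSpaceCore : NormedSpace.Core ℝ (WithNorm N hN) where
  norm_nonneg := hN.nonneg_s11
  norm_smul c x := hN.2.1 c x
  norm_triangle := hN.2.2
  norm_eq_zero_iff := hN.1

noncomputable instance : NormedAddCommGroup (WithNorm N hN) := .ofCore normedSpaceCore
noncomputable instance : NormedSpace ℝ (WithNorm N hN) := .ofCore normedSpaceCore

def linearEquiv : (Fin n → ℝ) ≃ₗ[ℝ] WithNorm N hN := LinearEquiv.refl ℝ _

noncomputable def equiv : (Fin n → ℝ) ≃L[ℝ] WithNorm N hN :=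
  linearEquiv.toContinuousLinearEquiv

noncomputable def toCLM : Matrix (Fin n) (Fin n) ℝ →ₗ[ℝ] (WithNorm N hN →L[ℝ] WithNorm N hN) :=
  LinearMap.toContinuousLinearMap.toLinearMap ∘ₗ Matrix.toLin'.toLinearMap

theorem toCLM_one : (toCLM 1 : WithNorm N hN →L[ℝ] WithNorm N hN) = 1 := by
  ext v
  exact congrArg equiv (Matrix.one_mulVec (equiv.symm v))

theorem opNorm_eq_norm_toCLM (M : Matrix (Fin n) (Fin n) ℝ) :
    opNorm N M = ‖(toCLM M : WithNorm N hN →L[ℝ] WithNorm N hN)‖ := by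
  rw [opNorm, ← ContinuousLinearMap.sSup_sphere_eq_norm]
  congr 1
  ext r
  simp only [mem_image, mem_sphere_zero_iff_norm]
  rfl

theorem continuous_toCLM :
    Continuous (toCLM : Matrix (Fin n) (Fin n) ℝ → WithNorm N hN →L[ℝ] WithNorm N hN) :=
  LinearMap.continuous_of_finiteDimensional _

theorem hasFDerivWithinAt_conj {F : (Fin n → ℝ) → Fin n → ℝ} {M : Matrix (Fin n) (Fin n) ℝ}
    {X : Set (Fin n → ℝ)} {y : WithNorm N hN}
    (hF : HasFDerivWithinAt F M.mulVecLin.toContinuousLinearMap X (equiv.symm y)) :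
    HasFDerivWithinAt (fun z => equiv (F (equiv.symm z))) (toCLM M) (equiv.symm ⁻¹' X) y :=
  equiv.hasFDerivAt.comp_hasFDerivWithinAt y
    (hF.comp y equiv.symm.hasFDerivWithinAt (mapsTo_preimage _ _))

end WithNorm

theorem HasMatrixMeasure.hasLogNorm {hN : IsNorm N} {M : Matrix (Fin n) (Fin n) ℝ} {m : ℝ}
    (hM : HasMatrixMeasure N M m) : HasLogNorm (WithNorm.toCLM (hN := hN) M) m := by
  simpa only [HasLogNorm, HasMatrixMeasure, WithNorm.opNorm_eq_norm_toCLM (hN := hN), map_add,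
    map_smul, WithNorm.toCLM_one] using hM

theorem Convex.norm_sub_le_exp_mul_of_hasMatrixMeasure_le (hN : IsNorm N) {X : Set (Fin n → ℝ)}
    (hX : Convex ℝ X) {F : ℝ → (Fin n → ℝ) → Fin n → ℝ}
    {A : ℝ → (Fin n → ℝ) → Matrix (Fin n) (Fin n) ℝ} {c : ℝ}
    (hF : ∀ t ≥ 0, ∀ y ∈ X, HasFDerivWithinAt (F t) (A t y).mulVecLin.toContinuousLinearMap X y)
    (hA : ∀ t ≥ 0, ContinuousOn (A t) X)
    (hμ : ∀ t ≥ 0, ∀ y ∈ X, ∃ m ≤ c, HasMatrixMeasure N (A t y) m)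
    {u v : ℝ → Fin n → ℝ}
    (huv : ∀ t ≥ 0, HasDerivWithinAt (fun s => u s - v s) (F t (u t) - F t (v t)) (Ici 0) t)
    (hu : ∀ t ≥ 0, u t ∈ X) (hv : ∀ t ≥ 0, v t ∈ X) :
    ∀ t ≥ 0, N (u t - v t) ≤ Real.exp (c * t) * N (u 0 - v 0) := by
  let e : (Fin n → ℝ) ≃L[ℝ] WithNorm N hN := WithNorm.equiv
  have hXe : Convex ℝ (e.symm ⁻¹' X) := hX.linear_preimage (e.symm : WithNorm N hN →ₗ[ℝ] _)
  refine hXe.norm_sub_le_exp_mul_of_hasLogNorm_le (F := fun t y => e (F t (e.symm y)))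
    (A := fun t y => WithNorm.toCLM (A t (e.symm y))) (u := fun t => e (u t))
    (v := fun t => e (v t)) ?_ ?_ ?_ ?_ (fun t ht => by simpa using hu t ht)
    (fun t ht => by simpa using hv t ht)
  · exact fun t ht y hy => WithNorm.hasFDerivWithinAt_conj (hF t ht _ hy)
  · exact fun t ht => (WithNorm.continuous_toCLM (hN := hN)).comp_continuousOn
      ((hA t ht).comp e.symm.continuous.continuousOn (mapsTo_preimage _ _))
  · intro t ht y hy
    obtain ⟨m, hm, hM⟩ := hμ t ht _ hy
    exact ⟨m, hm, hM.hasLogNorm⟩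
  · intro t ht
    simpa only [Function.comp_def, map_sub, ContinuousLinearEquiv.coe_coe,
      ContinuousLinearEquiv.symm_apply_apply] using e.hasFDerivAt.comp_hasDerivWithinAt t (huv t ht)

end MatrixMeasure

theorem HasFDerivWithinAt.add_mulVec {n m : ℕ} {f : (Fin n → ℝ) → Fin n → ℝ}
    {g : (Fin n → ℝ) → Fin m → ℝ} {Jf : Matrix (Fin n) (Fin n) ℝ} {Jg : Matrix (Fin m) (Fin n) ℝ}
    {X : Set (Fin n → ℝ)} {y : Fin n → ℝ}
    (hf : HasFDerivWithinAt f Jf.mulVecLin.toContinuousLinearMap X y)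
    (hg : HasFDerivWithinAt g Jg.mulVecLin.toContinuousLinearMap X y)
    (L : Matrix (Fin n) (Fin m) ℝ) :
    HasFDerivWithinAt (fun z => f z + L.mulVec (g z))
      (Jf + L * Jg).mulVecLin.toContinuousLinearMap X y := by
  refine (hf.add (L.mulVecLin.toContinuousLinearMap.hasFDerivAt.comp_hasFDerivWithinAt y hg))
    |>.congr_fderiv ?_
  ext v
  simp [Matrix.mulVec_mulVec]

theorem luenberger_observer_convergence_general (n mdim : ℕ)
    (N : (Fin n → ℝ) → ℝ) (hN : IsNorm N)
    (X : Set (Fin n → ℝ)) (hX : Convex ℝ X)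
    (f : ℝ → (Fin n → ℝ) → (Fin n → ℝ))
    (g : ℝ → (Fin n → ℝ) → (Fin mdim → ℝ))
    (Jf : ℝ → (Fin n → ℝ) → Matrix (Fin n) (Fin n) ℝ)
    (Jg : ℝ → (Fin n → ℝ) → Matrix (Fin mdim) (Fin n) ℝ)
    (L : Matrix (Fin n) (Fin mdim) ℝ)
    (hJfc : ContinuousOn (fun p : ℝ × (Fin n → ℝ) => Jf p.1 p.2) (Ici 0 ×ˢ X))
    (hJgc : ContinuousOn (fun p : ℝ × (Fin n → ℝ) => Jg p.1 p.2) (Ici 0 ×ˢ X))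
    (hfd : ∀ t, 0 ≤ t → ∀ x ∈ X,
      HasFDerivWithinAt (f t) ((Jf t x).mulVecLin.toContinuousLinearMap) X x)
    (hgd : ∀ t, 0 ≤ t → ∀ x ∈ X,
      HasFDerivWithinAt (g t) ((Jg t x).mulVecLin.toContinuousLinearMap) X x)
    (c : ℝ)
    (hμ : ∀ t, 0 ≤ t → ∀ x ∈ X,
      ∃ m : ℝ, HasMatrixMeasure N (Jf t x + L * Jg t x) m ∧ m ≤ c)
    (x xhat : ℝ → (Fin n → ℝ))
    (hx : ∀ t, 0 ≤ t → HasDerivAt x (f t (x t)) t ∧ x t ∈ X)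
    (hxhat : ∀ t, 0 ≤ t →
      HasDerivAt xhat (f t (xhat t) + L.mulVec (g t (xhat t) - g t (x t))) t ∧
        xhat t ∈ X) :
    ∀ t, 0 ≤ t → N (x t - xhat t) ≤ Real.exp (c * t) * N (x 0 - xhat 0) := by
  have hA : ∀ t ≥ 0, ContinuousOn (fun y => Jf t y + L * Jg t y) X := fun t ht =>
    have hslice : MapsTo (Prod.mk t) X (Ici 0 ×ˢ X) := fun y hy => ⟨ht, hy⟩
    (hJfc.comp (Continuous.prodMk_right t).continuousOn hslice).add
      ((continuous_const.matrix_mul continuous_id).comp_continuousOn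
        (hJgc.comp (Continuous.prodMk_right t).continuousOn hslice))
  have herr : ∀ t ≥ 0, HasDerivWithinAt (fun s => x s - xhat s)
      ((f t (x t) + L.mulVec (g t (x t))) - (f t (xhat t) + L.mulVec (g t (xhat t)))) (Ici 0) t :=
    fun t ht => ((hx t ht).1.sub (hxhat t ht).1).hasDerivWithinAt.congr_deriv (by
      rw [Matrix.mulVec_sub]
      abel)
  refine hX.norm_sub_le_exp_mul_of_hasMatrixMeasure_le hN
    (fun t ht y hy => (hfd t ht y hy).add_mulVec (hgd t ht y hy) L) hA (fun t ht y hy => ?_) herr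
    (fun t ht => (hx t ht).2) (fun t ht => (hxhat t ht).2)
  obtain ⟨m, hM, hm⟩ := hμ t ht y hy
  exact ⟨m, hm, hM⟩

/-- Luenberger observer convergence: if
`μ(∂f/∂x(t,x) + L ∂g/∂x(t,x)) ≤ c` for all `x ∈ 𝒳` and `t ≥ 0`, then along any
solution of the system `ẋ = f(t,x)`, `y = g(t,x)` interconnected with the
observer `x̂̇ = f(t,x̂) + L(g(t,x̂) − g(t,x))` (with both trajectories in `𝒳`),
one has `|x(t) − x̂(t)| ≤ e^{ct} |x(0) − x̂(0)|` for all `t ≥ 0`; in particular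
`c < 0` gives global exponential stability of the zero-error set. -/
theorem luenberger_observer_convergence (n mdim : ℕ) (hn : 0 < n)
    (N : (Fin n → ℝ) → ℝ) (hN : IsNorm N)
    (X : Set (Fin n → ℝ)) (hX : Convex ℝ X)
    (f : ℝ → (Fin n → ℝ) → (Fin n → ℝ))
    (g : ℝ → (Fin n → ℝ) → (Fin mdim → ℝ))
    (Jf : ℝ → (Fin n → ℝ) → Matrix (Fin n) (Fin n) ℝ)
    (Jg : ℝ → (Fin n → ℝ) → Matrix (Fin mdim) (Fin n) ℝ)
    (L : Matrix (Fin n) (Fin mdim) ℝ)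
    (hfc : ContinuousOn (fun p : ℝ × (Fin n → ℝ) => f p.1 p.2) (Ici 0 ×ˢ X))
    (hgc : ContinuousOn (fun p : ℝ × (Fin n → ℝ) => g p.1 p.2) (Ici 0 ×ˢ X))
    (hJfc : ContinuousOn (fun p : ℝ × (Fin n → ℝ) => Jf p.1 p.2) (Ici 0 ×ˢ X))
    (hJgc : ContinuousOn (fun p : ℝ × (Fin n → ℝ) => Jg p.1 p.2) (Ici 0 ×ˢ X))
    (hfd : ∀ t, 0 ≤ t → ∀ x ∈ X,
      HasFDerivWithinAt (f t) ((Jf t x).mulVecLin.toContinuousLinearMap) X x)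
    (hgd : ∀ t, 0 ≤ t → ∀ x ∈ X,
      HasFDerivWithinAt (g t) ((Jg t x).mulVecLin.toContinuousLinearMap) X x)
    (c : ℝ)
    (hμ : ∀ t, 0 ≤ t → ∀ x ∈ X,
      ∃ m : ℝ, HasMatrixMeasure N (Jf t x + L * Jg t x) m ∧ m ≤ c)
    (x xhat : ℝ → (Fin n → ℝ))
    (hx : ∀ t, 0 ≤ t → HasDerivAt x (f t (x t)) t ∧ x t ∈ X)
    (hxhat : ∀ t, 0 ≤ t →
      HasDerivAt xhat (f t (xhat t) + L.mulVec (g t (xhat t) - g t (x t))) t ∧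
        xhat t ∈ X) :
    ∀ t, 0 ≤ t → N (x t - xhat t) ≤ Real.exp (c * t) * N (x 0 - xhat 0) :=
  luenberger_observer_convergence_general n mdim N hN X hX f g Jf Jg L hJfc hJgc hfd hgd c hμ x xhat
    hx hxhat
end

section
/- If βⱼ > 0 for all j = 1,…,n−1 (and βₙ := 1), then the one-norm matrix measure of the traffic Jacobian satisfies μ₁(J(t,x)) ≤ −ν · min_j βⱼ < 0 for all t ≥ 0 and x ∈ 𝒳, so the traffic dynamics are contractive with respect to the one-norm. -/
open Finset

/-!
The Jacobian is Metzler (its off-diagonal entries `a j` and `-b j` are nonnegative), so its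
one-norm measure is its largest column sum. In column `j` the off-diagonal entries cancel the
`b` and `a` parts of the diagonal entry, leaving `[j = 0] ∂₁p₀ - βⱼ Dⱼ′ ≤ -βⱼ ν`.
-/

theorem Matrix.diag_add_sum_abs_offDiag_eq_sum_col {ι R : Type*} [Fintype ι] [DecidableEq ι]
    [AddCommGroup R] [LinearOrder R] [IsOrderedAddMonoid R] (A : Matrix ι ι R)
    (hA : ∀ i j, i ≠ j → 0 ≤ A i j) (j : ι) :
    A j j + ∑ i ∈ univ.erase j, |A i j| = ∑ i, A i j := by
  rw [← add_sum_erase univ (A · j) (mem_univ j)]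
  congr 1
  exact sum_congr rfl fun i hi => abs_of_nonneg (hA i j (ne_of_mem_erase hi))

theorem ciSup_le_neg_mul_ciInf {ι : Type*} [Finite ι] [Nonempty ι] {f w : ι → ℝ} {ν : ℝ}
    (hν : 0 ≤ ν) (hf : ∀ j, f j ≤ -(ν * w j)) : ⨆ j, f j ≤ -(ν * ⨅ j, w j) :=
  ciSup_le fun j => (hf j).trans <| neg_le_neg <|
    mul_le_mul_of_nonneg_left (ciInf_le (Finite.bddBelow_range w) j) hν

theorem lt_ciInf_of_finite {ι α : Type*} [Finite ι] [Nonempty ι]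
    [ConditionallyCompleteLinearOrder α] {w : ι → α} {x : α} (hw : ∀ j, x < w j) :
    x < ⨅ j, w j := by
  obtain ⟨j, hj⟩ := exists_eq_ciInf_of_finite (f := w)
  exact hj ▸ hw j

theorem sum_range_ite_eq_add_one {M : Type*} [AddCommMonoid M] (n j : ℕ) (f : ℕ → M) :
    ∑ i ∈ range n, (if j = i + 1 then f i else 0) = if 0 < j ∧ j ≤ n then f (j - 1) else 0 := by
  cases j with
  | zero => simp
  | succ k => simp [sum_ite_eq]

section Traffic

variable (n : ℕ) (a b Dp β : ℕ → ℝ) (dp0 : ℝ)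

def trafficDiag (i : ℕ) : ℝ :=
  (if i = 0 then dp0 - a 0 else if i = n - 1 then b (n - 2) else b (i - 1) - a i)
    - (if i = n - 1 then Dp (n - 1) else β i * Dp i)

/-- The entries of the traffic Jacobian, with both indices read in `ℕ`. -/
def trafficEntry (i j : ℕ) : ℝ :=
  if i = j then trafficDiag n a b Dp β dp0 i
  else if i = j + 1 then a j
  else if j = i + 1 then -b i
  else 0

variable {n a b Dp β dp0}

theorem trafficEntry_eq_sum_bands (i j : ℕ) :
    trafficEntry n a b Dp β dp0 i j =
      (if i = j then trafficDiag n a b Dp β dp0 j else 0) + (if i = j + 1 then a j else 0)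
        + (if j = i + 1 then -b i else 0) := by
  unfold trafficEntry
  split_ifs <;> first | omega | simp_all

theorem trafficEntry_nonneg_of_ne (ha : ∀ i, 0 ≤ a i) (hb : ∀ i, b i ≤ 0) {i j : ℕ}
    (hij : i ≠ j) : 0 ≤ trafficEntry n a b Dp β dp0 i j := by
  unfold trafficEntry
  split_ifs
  exacts [absurd ‹i = j› hij, ha j, neg_nonneg.2 (hb i), le_rfl]

theorem sum_trafficEntry (hn : 2 ≤ n) {j : ℕ} (hj : j < n) :
    ∑ i ∈ range n, trafficEntry n a b Dp β dp0 i j =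
      (if j = 0 then dp0 else 0) - (if j = n - 1 then 1 else β j) * Dp j := by
  simp only [trafficEntry_eq_sum_bands, sum_add_distrib, sum_ite_eq', sum_range_ite_eq_add_one,
    mem_range]
  unfold trafficDiag
  rcases Nat.eq_zero_or_pos j with rfl | hj0
  · simp only [hj, show (0 : ℕ) ≠ n - 1 by omega, show 1 < n by omega, lt_self_iff_false,
      false_and, ↓reduceIte, zero_add, add_zero]
    ring
  rcases eq_or_ne j (n - 1) with rfl | hjn
  · simp only [hj, hj0, hj0.ne', show ¬n - 1 + 1 < n by omega, show n - 1 - 1 = n - 2 by omega,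
      tsub_le_self, and_self, ↓reduceIte, add_zero]
    ring
  simp only [hj, hj0, hj0.ne', hjn, show j + 1 < n by omega, hj.le, and_self, ↓reduceIte]
  ring

theorem sum_trafficEntry_le (hn : 2 ≤ n) (hdp0 : dp0 ≤ 0) {ν : ℝ} (hDp : ∀ i, ν ≤ Dp i)
    (hβ : ∀ i, 0 < β i) {j : ℕ} (hj : j < n) :
    ∑ i ∈ range n, trafficEntry n a b Dp β dp0 i j ≤ -(ν * if j = n - 1 then 1 else β j) := by
  rw [sum_trafficEntry hn hj]
  have hβD : ν * β j ≤ β j * Dp j := by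
    rw [mul_comm]; exact mul_le_mul_of_nonneg_left (hDp j) (hβ j).le
  split_ifs <;> linarith [hDp j]

end Traffic

/-- Here `μ₁(A) = max_j (A_{jj} + Σ_{i≠j}|A_{ij}|)`, `a i = ∂ᵢpᵢ`, `b i = ∂_{i+1}pᵢ`,
`dp0 = ∂₁p₀`, `Dp i = Dᵢ′`, and `βⱼ` is extended by `βₙ := 1` at the last index `n - 1`. -/
theorem traffic_contractive_one_norm (n : ℕ) (hn : 2 ≤ n)
    (a b Dp β : ℕ → ℝ) (dp0 : ℝ) (ν : ℝ) (hν : 0 < ν)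
    (ha : ∀ i, 0 ≤ a i) (hb : ∀ i, b i ≤ 0) (hdp0 : dp0 ≤ 0)
    (hDp : ∀ i, ν ≤ Dp i) (hβ : ∀ i, 0 < β i ∧ β i ≤ 1)
    (J : Matrix (Fin n) (Fin n) ℝ)
    (hJ : ∀ i j : Fin n, J i j =
      if (i : ℕ) = (j : ℕ) then
        (if (i : ℕ) = 0 then dp0 - a 0
         else if (i : ℕ) = n - 1 then b (n - 2)
         else b ((i : ℕ) - 1) - a (i : ℕ))
        - (if (i : ℕ) = n - 1 then Dp (n - 1) else β (i : ℕ) * Dp (i : ℕ))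
      else if (i : ℕ) = (j : ℕ) + 1 then a (j : ℕ)
      else if (j : ℕ) = (i : ℕ) + 1 then -b (i : ℕ)
      else 0) :
    (⨆ j : Fin n, (J j j + ∑ i ∈ Finset.univ.erase j, |J i j|)) ≤
        -(ν * ⨅ j : Fin n, (if (j : ℕ) = n - 1 then (1 : ℝ) else β (j : ℕ))) ∧
      -(ν * ⨅ j : Fin n, (if (j : ℕ) = n - 1 then (1 : ℝ) else β (j : ℕ))) < 0 := by
  have : Nonempty (Fin n) := ⟨⟨0, by omega⟩⟩
  have hJ' : ∀ i j : Fin n, J i j = trafficEntry n a b Dp β dp0 i j := hJ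
  have hw : ∀ j : ℕ, 0 < if j = n - 1 then (1 : ℝ) else β j := fun j => by
    split_ifs
    exacts [one_pos, (hβ j).1]
  refine ⟨ciSup_le_neg_mul_ciInf hν.le fun j => ?_,
    neg_neg_of_pos (mul_pos hν (lt_ciInf_of_finite fun j => hw j))⟩
  rw [J.diag_add_sum_abs_offDiag_eq_sum_col fun i j hij => by
      rw [hJ']; exact trafficEntry_nonneg_of_ne ha hb (Fin.val_ne_of_ne hij)]
  simp only [hJ', Fin.sum_univ_eq_sum_range (trafficEntry n a b Dp β dp0 · j)]
  exact sum_trafficEntry_le hn hdp0 hDp (fun i => (hβ i).1) j.isLt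
end
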